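/- arXiv:2505.01099 — 3 statements merged into one kernel-verified Lean document; each statement's English description precedes it below -/
import Mathlib

section
/- Fix an integer delay τ ≥ 1, a learning rate η > 0, and momentum coefficients γ_t ∈ [0,1) forming an increasing sequence. Let (w_t) and (d_t) be sequences in ℝ^m satisfying, for all t > τ, d_t = γ_t (w_t − w_{t−1}) and w_{t+1} = w_t + d_t − η (1 − γ_t) ḡ_t, and suppose the gradients are uniformly bounded: ‖ḡ_t‖ ≤ G for all t. Define c_t := Σ_{i=1}^{τ} Π_{j=t−τ+1}^{t−i} γ_j (empty products equal 1, so 1 ≤ c_t ≤ τ). Then for all t > 2τ, ‖Δ_t − c_t d̄_t‖ ≤ η G τ² (1 − γ_{t−τ}), where Δ_t := w_t − w_{t−τ} and d̄_t := d_{t−τ}; consequently, if γ_t → 1 as t → ∞, then ‖Δ_t − c_t d̄_t‖ → 0. -/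
open Finset Filter

/-- For the delayed Nesterov recursion with increasing momentum coefficients
`γ t ∈ [0,1)` and uniformly bounded gradients `‖ḡ t‖ ≤ G`, define
`c t := ∑_{i=1}^{τ} ∏_{j=t-τ+1}^{t-i} γ j`. Then for all `t > 2τ`,
`‖Δ_t - c_t • d̄_t‖ ≤ η G τ² (1 - γ (t-τ))`, where `Δ_t = w t - w (t-τ)` and
`d̄_t = d (t-τ)`; consequently, if `γ t → 1` then `‖Δ_t - c_t • d̄_t‖ → 0`. -/
theorem delayed_nesterov_discrepancy_bound
    {m : ℕ} (τ : ℕ) (hτ : 1 ≤ τ) (η : ℝ) (hη : 0 < η)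
    (γ : ℕ → ℝ) (hγ : ∀ t, γ t ∈ Set.Ico (0 : ℝ) 1) (hγmono : Monotone γ)
    (w d g : ℕ → EuclideanSpace ℝ (Fin m))
    (hd : ∀ t, τ < t → d t = γ t • (w t - w (t - 1)))
    (hw : ∀ t, τ < t → w (t + 1) = w t + d t - (η * (1 - γ t)) • g t)
    (G : ℝ) (hG : ∀ t, ‖g t‖ ≤ G)
    (c : ℕ → ℝ)
    (hc : ∀ t, c t = ∑ i ∈ Finset.Icc 1 τ, ∏ j ∈ Finset.Icc (t - τ + 1) (t - i), γ j) :
    (∀ t, 2 * τ < t →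
        ‖(w t - w (t - τ)) - c t • d (t - τ)‖ ≤ η * G * (τ : ℝ) ^ 2 * (1 - γ (t - τ)))
      ∧ (Tendsto γ atTop (nhds 1) →
          Tendsto (fun t => ‖(w t - w (t - τ)) - c t • d (t - τ)‖) atTop (nhds 0)) := by
  have hG0 : 0 ≤ G := le_trans (norm_nonneg _) (hG 0)
  -- unrolled recursion
  have key : ∀ t₀, τ < t₀ → ∀ n : ℕ,
      w (t₀ + n + 1) - w (t₀ + n) = (∏ j ∈ Finset.Icc (t₀+1) (t₀+n), γ j) • d t₀
        - ∑ s ∈ Finset.Icc t₀ (t₀+n),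
            (η * (1 - γ s) * ∏ j ∈ Finset.Icc (s+1) (t₀+n), γ j) • g s := by
    intro t₀ ht₀ n
    induction n with
    | zero =>
      have he : Finset.Icc (t₀+1) t₀ = ∅ := Finset.Icc_eq_empty (by omega)
      rw [hw t₀ ht₀]
      simp [he]
      abel
    | succ n ih =>
      have ht : τ < t₀ + n + 1 := by omega
      have h1 : w (t₀ + n + 1 + 1) - w (t₀ + n + 1)
          = γ (t₀+n+1) • (w (t₀+n+1) - w (t₀+n))
            - (η * (1 - γ (t₀+n+1))) • g (t₀+n+1) := by
        rw [hw _ ht, hd _ ht]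
        have h2 : t₀ + n + 1 - 1 = t₀ + n := by omega
        rw [h2]; abel
      have hsum : ∀ s ∈ Finset.Icc t₀ (t₀+n),
          (η * (1 - γ s) * ∏ j ∈ Finset.Icc (s+1) (t₀+n+1), γ j) • g s
            = γ (t₀+n+1) • ((η * (1 - γ s) * ∏ j ∈ Finset.Icc (s+1) (t₀+n), γ j) • g s) := by
        intro s hs
        rw [Finset.mem_Icc] at hs
        rw [Finset.prod_Icc_succ_top (by omega : s + 1 ≤ t₀ + n + 1), smul_smul]
        ring_nf
      have he : Finset.Icc (t₀+n+1+1) (t₀+n+1) = ∅ := Finset.Icc_eq_empty (by omega)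
      show w (t₀ + n + 1 + 1) - w (t₀ + n + 1)
          = (∏ j ∈ Finset.Icc (t₀+1) (t₀+n+1), γ j) • d t₀
            - ∑ s ∈ Finset.Icc t₀ (t₀+n+1),
                (η * (1 - γ s) * ∏ j ∈ Finset.Icc (s+1) (t₀+n+1), γ j) • g s
      rw [h1, ih,
        Finset.prod_Icc_succ_top (by omega : t₀ + 1 ≤ t₀ + n + 1),
        Finset.sum_Icc_succ_top (by omega : t₀ ≤ t₀ + n + 1),
        Finset.sum_congr rfl hsum, ← Finset.smul_sum, he]
      simp only [Finset.prod_empty, mul_one]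
      rw [smul_sub, smul_smul]
      rw [mul_comm (γ (t₀+n+1))]
      abel
  -- main bound
  have main : ∀ t, 2 * τ < t →
      ‖(w t - w (t - τ)) - c t • d (t - τ)‖ ≤ η * G * (τ : ℝ) ^ 2 * (1 - γ (t - τ)) := by
    intro t ht
    set t₀ := t - τ with ht₀def
    have ht₀ : τ < t₀ := by omega
    have htt : t₀ + τ = t := by omega
    have hγ0 : (0:ℝ) ≤ γ t₀ := (hγ t₀).1
    have hcγ : c t = ∑ n ∈ Finset.range τ, ∏ j ∈ Finset.Icc (t₀+1) (t₀+n), γ j := by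
      rw [hc]
      refine Finset.sum_bij' (fun i _ => τ - i) (fun n _ => τ - n) ?_ ?_ ?_ ?_ ?_
      · intro a ha; simp only [Finset.mem_Icc] at ha; simp only [Finset.mem_range]; omega
      · intro a ha; simp only [Finset.mem_range] at ha; simp only [Finset.mem_Icc]; omega
      · intro a ha; simp only [Finset.mem_Icc] at ha; omega
      · intro a ha; simp only [Finset.mem_range] at ha; omega
      · intro a ha; simp only [Finset.mem_Icc] at ha
        have h1 : t - τ + 1 = t₀ + 1 := by omega
        have h2 : t - a = t₀ + (τ - a) := by omega
        rw [h1, h2]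
    have hΔ : (w t - w t₀) - c t • d t₀
        = - ∑ n ∈ Finset.range τ, ∑ s ∈ Finset.Icc t₀ (t₀+n),
            (η * (1 - γ s) * ∏ j ∈ Finset.Icc (s+1) (t₀+n), γ j) • g s := by
      have h1 : w t - w t₀ = ∑ n ∈ Finset.range τ, (w (t₀+n+1) - w (t₀+n)) := by
        rw [← htt]; exact (Finset.sum_range_sub (fun n => w (t₀+n)) τ).symm
      rw [h1, hcγ, Finset.sum_smul, ← Finset.sum_sub_distrib, ← Finset.sum_neg_distrib]
      refine Finset.sum_congr rfl fun n _ => ?_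
      rw [key t₀ ht₀ n]
      abel
    rw [hΔ, norm_neg]
    have hB : (0:ℝ) ≤ η * (1 - γ t₀) * G := by
      have := (hγ t₀).2
      have : (0:ℝ) ≤ 1 - γ t₀ := by linarith
      positivity
    calc ‖∑ n ∈ Finset.range τ, ∑ s ∈ Finset.Icc t₀ (t₀+n),
            (η * (1 - γ s) * ∏ j ∈ Finset.Icc (s+1) (t₀+n), γ j) • g s‖
        ≤ ∑ n ∈ Finset.range τ, ‖∑ s ∈ Finset.Icc t₀ (t₀+n),
            (η * (1 - γ s) * ∏ j ∈ Finset.Icc (s+1) (t₀+n), γ j) • g s‖ :=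
          norm_sum_le _ _
      _ ≤ ∑ n ∈ Finset.range τ, (τ : ℝ) * (η * (1 - γ t₀) * G) := by
          refine Finset.sum_le_sum fun n hn => ?_
          rw [Finset.mem_range] at hn
          calc ‖∑ s ∈ Finset.Icc t₀ (t₀+n),
                  (η * (1 - γ s) * ∏ j ∈ Finset.Icc (s+1) (t₀+n), γ j) • g s‖
              ≤ ∑ s ∈ Finset.Icc t₀ (t₀+n),
                  ‖(η * (1 - γ s) * ∏ j ∈ Finset.Icc (s+1) (t₀+n), γ j) • g s‖ :=
                norm_sum_le _ _
            _ ≤ ∑ s ∈ Finset.Icc t₀ (t₀+n), (η * (1 - γ t₀) * G) := by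
                refine Finset.sum_le_sum fun s hs => ?_
                rw [Finset.mem_Icc] at hs
                have hP0 : (0:ℝ) ≤ ∏ j ∈ Finset.Icc (s+1) (t₀+n), γ j :=
                  Finset.prod_nonneg fun j _ => (hγ j).1
                have hP1 : (∏ j ∈ Finset.Icc (s+1) (t₀+n), γ j) ≤ 1 :=
                  Finset.prod_le_one (fun j _ => (hγ j).1) (fun j _ => le_of_lt (hγ j).2)
                have hγs : γ t₀ ≤ γ s := hγmono hs.1
                have hγs1 : γ s < 1 := (hγ s).2
                have hgs0 : (0:ℝ) ≤ ‖g s‖ := norm_nonneg _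
                have hgs : ‖g s‖ ≤ G := hG s
                have h1s : (0:ℝ) ≤ 1 - γ s := by linarith
                have hηs0 : (0:ℝ) ≤ η * (1 - γ s) := mul_nonneg hη.le h1s
                rw [norm_smul, Real.norm_eq_abs,
                  abs_of_nonneg (mul_nonneg hηs0 hP0)]
                calc η * (1 - γ s) * (∏ j ∈ Finset.Icc (s+1) (t₀+n), γ j) * ‖g s‖
                    ≤ (η * (1 - γ s) * 1) * G :=
                      mul_le_mul (mul_le_mul_of_nonneg_left hP1 hηs0) hgs hgs0
                        (mul_nonneg hηs0 zero_le_one)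
                  _ = η * (1 - γ s) * G := by ring
                  _ ≤ η * (1 - γ t₀) * G :=
                      mul_le_mul_of_nonneg_right
                        (mul_le_mul_of_nonneg_left (by linarith) hη.le) hG0
            _ = ((n:ℝ) + 1) * (η * (1 - γ t₀) * G) := by
                rw [Finset.sum_const, Nat.card_Icc]
                have : t₀ + n + 1 - t₀ = n + 1 := by omega
                rw [this, nsmul_eq_mul]
                push_cast; ring
            _ ≤ (τ : ℝ) * (η * (1 - γ t₀) * G) := by
                apply mul_le_mul_of_nonneg_right _ hB
                exact_mod_cast Nat.succ_le_of_lt hn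
      _ = (τ:ℝ) * ((τ:ℝ) * (η * (1 - γ t₀) * G)) := by
          rw [Finset.sum_const, Finset.card_range, nsmul_eq_mul]
      _ = η * G * (τ : ℝ) ^ 2 * (1 - γ t₀) := by ring
  refine ⟨main, fun hγ1 => ?_⟩
  have hsub : Tendsto (fun t : ℕ => t - τ) atTop atTop := tendsto_sub_atTop_nat τ
  have h2 : Tendsto (fun t => γ (t - τ)) atTop (nhds 1) := hγ1.comp hsub
  have h3 : Tendsto (fun t => η * G * (τ:ℝ)^2 * (1 - γ (t - τ))) atTop (nhds 0) := by
    have := (tendsto_const_nhds (x := (1:ℝ)) (f := atTop)).sub h2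
    simpa using this.const_mul (η * G * (τ:ℝ)^2)
  refine squeeze_zero' ?_ ?_ h3
  · exact Filter.Eventually.of_forall fun t => norm_nonneg _
  · exact Filter.eventually_atTop.mpr ⟨2*τ+1, fun t ht => main t (by omega)⟩
end

section
/- (Proposition 1: look-ahead acts as delay correction.) Fix an integer delay τ ≥ 1, a learning rate η > 0, and an increasing sequence of momentum coefficients γ_t ∈ [0,1) with lim_{t→∞} γ_t = 1. Let f : ℝ^m → ℝ be differentiable with uniformly bounded gradient, ‖∇f(x)‖ ≤ G for all x. Let (w_t) and (d_t) be sequences in ℝ^m satisfying, for all t > τ, d_t = γ_t (w_t − w_{t−1}) and w_{t+1} = w_t + d_t − η (1 − γ_t) ∇f(w_{t−τ} + d_{t−τ}). Suppose moreover that there is δ > 0 with ‖d_{t−τ}‖ ≥ δ for all sufficiently large t. Then lim_{t→∞} cos(Δ_t, d̄_t) = 1, where Δ_t := w_t − w_{t−τ}, d̄_t := d_{t−τ}, and cos(x, y) := ⟨x, y⟩ / (‖x‖·‖y‖) is the cosine similarity in ℝ^m. -/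
open Finset Filter
open scoped RealInnerProductSpace

set_option maxHeartbeats 1200000 in
/-- Proposition 1: look-ahead acts as delay correction.
For the delayed Nesterov iteration with delay `τ ≥ 1`, learning rate `η > 0`, and an
increasing sequence `γ t ∈ [0,1)` with `γ t → 1`, where the gradients of a differentiable
function `f` with uniformly bounded gradient are computed at the delayed extrapolated
points `w (t-τ) + d (t-τ)`, and assuming `‖d (t-τ)‖ ≥ δ > 0` for all sufficiently large `t`,
the cosine similarity between the weight discrepancy `Δ_t = w t - w (t-τ)` and the
delayed look-ahead `d̄_t = d (t-τ)` converges to `1`. -/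
theorem lookahead_delay_correction
    {m : ℕ} (τ : ℕ) (hτ : 1 ≤ τ) (η : ℝ) (hη : 0 < η)
    (γ : ℕ → ℝ) (hγ : ∀ t, γ t ∈ Set.Ico (0 : ℝ) 1) (hγmono : Monotone γ)
    (hγlim : Tendsto γ atTop (nhds 1))
    (f : EuclideanSpace ℝ (Fin m) → ℝ) (hf : Differentiable ℝ f)
    (G : ℝ) (hG : ∀ x, ‖gradient f x‖ ≤ G)
    (w d : ℕ → EuclideanSpace ℝ (Fin m))
    (hd : ∀ t, τ < t → d t = γ t • (w t - w (t - 1)))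
    (hw : ∀ t, τ < t →
      w (t + 1) = w t + d t - (η * (1 - γ t)) • gradient f (w (t - τ) + d (t - τ)))
    (δ : ℝ) (hδ : 0 < δ) (hdlb : ∀ᶠ t in atTop, δ ≤ ‖d (t - τ)‖) :
    Tendsto (fun t => ⟪w t - w (t - τ), d (t - τ)⟫ / (‖w t - w (t - τ)‖ * ‖d (t - τ)‖))
      atTop (nhds 1) := by
  have hG0 : 0 ≤ G := le_trans (norm_nonneg _) (hG 0)
  have hγ0 : ∀ t, 0 ≤ γ t := fun t => (hγ t).1
  have hγ1 : ∀ t, γ t ≤ 1 := fun t => le_of_lt (hγ t).2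
  set g : ℕ → EuclideanSpace ℝ (Fin m) :=
    fun s => gradient f (w (s - τ) + d (s - τ)) with hgdef
  have hgn : ∀ s, ‖g s‖ ≤ G := fun s => hG _
  have hgn0 : ∀ s, (0:ℝ) ≤ ‖g s‖ := fun s => norm_nonneg _
  -- one step of the w recursion
  have hstepw : ∀ s, τ < s → w (s + 1) - w s = d s - (η * (1 - γ s)) • g s := by
    intro s hs
    rw [hw s hs]
    abel
  -- one step of the d recursion
  have hstepd : ∀ r, τ + 2 ≤ r →
      d r = γ r • d (r - 1) - (γ r * (η * (1 - γ (r - 1)))) • g (r - 1) := by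
    intro r hr
    have h1 : τ < r - 1 := by omega
    have h2 : (r - 1) + 1 = r := by omega
    have h3 : τ < r := by omega
    have hws := hstepw (r - 1) h1
    rw [h2] at hws
    rw [hd r h3, hws, smul_sub, smul_smul]
  -- norm growth bound
  have hA : ∀ r, τ + 2 ≤ r → ‖d r‖ ≤ ‖d (r - 1)‖ + η * G := by
    intro r hr
    rw [hstepd r hr]
    refine le_trans (norm_sub_le _ _) ?_
    rw [norm_smul, norm_smul, Real.norm_eq_abs, Real.norm_eq_abs,
      abs_of_nonneg (hγ0 r),
      abs_of_nonneg (mul_nonneg (hγ0 r) (mul_nonneg hη.le (by linarith [hγ1 (r-1)])))]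
    have t1 : γ r * ‖d (r - 1)‖ ≤ ‖d (r - 1)‖ :=
      mul_le_of_le_one_left (norm_nonneg _) (hγ1 r)
    have c1 : γ r * (η * (1 - γ (r - 1))) ≤ η := by
      nlinarith [mul_nonneg (mul_nonneg (hγ0 r) hη.le) (hγ0 (r-1)),
        mul_nonneg (sub_nonneg.mpr (hγ1 r)) hη.le]
    have t2 : γ r * (η * (1 - γ (r - 1))) * ‖g (r - 1)‖ ≤ η * G :=
      mul_le_mul c1 (hgn _) (hgn0 _) hη.le
    linarith
  have hC : ∀ b, τ + 1 ≤ b → ∀ j, ‖d (b + j)‖ ≤ ‖d b‖ + j * (η * G) := by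
    intro b hb j
    induction j with
    | zero => simp
    | succ j ih =>
      have hr : τ + 2 ≤ b + (j + 1) := by omega
      have h := hA (b + (j + 1)) hr
      have he : b + (j + 1) - 1 = b + j := by omega
      rw [he] at h
      push_cast
      nlinarith [ih]
  -- difference step bound
  have hB : ∀ r, τ + 2 ≤ r →
      ‖d r - d (r - 1)‖ ≤ (1 - γ (r - 1)) * (‖d (r - 1)‖ + η * G) := by
    intro r hr
    have heq : d r - d (r - 1)
        = (γ r - 1) • d (r - 1) - (γ r * (η * (1 - γ (r - 1)))) • g (r - 1) := by
      rw [hstepd r hr, sub_smul, one_smul]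
      abel
    rw [heq]
    refine le_trans (norm_sub_le _ _) ?_
    rw [norm_smul, norm_smul, Real.norm_eq_abs, Real.norm_eq_abs]
    have hm : γ (r - 1) ≤ γ r := hγmono (by omega)
    have h1 : |γ r - 1| = 1 - γ r := by rw [abs_sub_comm, abs_of_nonneg (by linarith [hγ1 r])]
    have h2 : |γ r * (η * (1 - γ (r - 1)))| = γ r * (η * (1 - γ (r - 1))) := by
      exact abs_of_nonneg (mul_nonneg (hγ0 r) (mul_nonneg hη.le (by linarith [hγ1 (r-1)])))
    rw [h1, h2]
    have h5 : (0:ℝ) ≤ 1 - γ (r - 1) := by linarith [hγ1 (r - 1)]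
    have a1 : (1 - γ r) * ‖d (r - 1)‖ ≤ (1 - γ (r - 1)) * ‖d (r - 1)‖ :=
      mul_le_mul_of_nonneg_right (by linarith) (norm_nonneg _)
    have c2 : γ r * (η * (1 - γ (r - 1))) ≤ η * (1 - γ (r - 1)) :=
      mul_le_of_le_one_left (mul_nonneg hη.le h5) (hγ1 r)
    have a2 : γ r * (η * (1 - γ (r - 1))) * ‖g (r - 1)‖ ≤ (η * (1 - γ (r - 1))) * G :=
      mul_le_mul c2 (hgn _) (hgn0 _) (mul_nonneg hη.le h5)
    nlinarith [a1, a2]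
  -- accumulated difference bound over a window of length ≤ τ
  have hD : ∀ b, τ + 1 ≤ b → ∀ j, j ≤ τ →
      ‖d (b + j) - d b‖ ≤ j * ((1 - γ b) * (‖d b‖ + τ * (η * G) + η * G)) := by
    intro b hb j
    induction j with
    | zero => intro _; simp
    | succ j ih =>
      intro hjτ
      have ih' := ih (by omega)
      have hr : τ + 2 ≤ b + (j + 1) := by omega
      have hBr := hB (b + (j + 1)) hr
      have he : b + (j + 1) - 1 = b + j := by omega
      rw [he] at hBr
      have hCb := hC b hb j
      have hm : γ b ≤ γ (b + j) := hγmono (by omega)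
      have tri : ‖d (b + (j+1)) - d b‖ ≤ ‖d (b + (j+1)) - d (b + j)‖ + ‖d (b + j) - d b‖ :=
        norm_sub_le_norm_sub_add_norm_sub _ _ _
      have hstep : ‖d (b + (j+1)) - d (b + j)‖
          ≤ (1 - γ b) * (‖d b‖ + τ * (η * G) + η * G) := by
        refine hBr.trans ?_
        have hjτ' : (j:ℝ) ≤ (τ:ℝ) := by exact_mod_cast (by omega : j ≤ τ)
        have h3 : ‖d (b + j)‖ + η * G ≤ ‖d b‖ + (τ:ℝ) * (η * G) + η * G := by
          nlinarith [hCb, mul_le_mul_of_nonneg_right hjτ' (by positivity : (0:ℝ) ≤ η * G)]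
        have h4 : (1 - γ (b + j)) ≤ 1 - γ b := by linarith
        have h5 : (0:ℝ) ≤ 1 - γ (b + j) := by linarith [hγ1 (b + j)]
        have h6 : (0:ℝ) ≤ ‖d b‖ + (τ:ℝ) * (η * G) + η * G := by positivity
        exact mul_le_mul h4 h3 (by positivity) (by linarith [hγ1 b])
      push_cast
      push_cast at ih'
      nlinarith [tri, hstep, ih']
  -- main per-t bound
  have htel : ∀ t : ℕ, 2*τ + 2 ≤ t →
      ‖(w t - w (t - τ)) - (τ : ℝ) • d (t - τ)‖ ≤
        (1 - γ (t - τ)) *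
          ((τ:ℝ) * ((τ:ℝ) * (‖d (t - τ)‖ + τ * (η * G) + η * G) + η * G)) := by
    intro t ht
    set b := t - τ with hbdef
    have hbτ : τ + 1 ≤ b := by omega
    have hbt : b + τ = t := by omega
    have hsum : w t - w b = ∑ j ∈ range τ, (w (b + (j+1)) - w (b + j)) := by
      have h := Finset.sum_range_sub (fun j => w (b + j)) τ
      simp only [add_zero, hbt] at h
      exact h.symm
    have hterm : ∀ j, j < τ →
        w (b + (j+1)) - w (b + j) = d (b + j) - (η * (1 - γ (b + j))) • g (b + j) := by
      intro j hj
      have h1 : τ < b + j := by omega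
      have h := hstepw (b + j) h1
      have h2 : b + j + 1 = b + (j + 1) := by omega
      rw [h2] at h
      exact h
    have key : (w t - w b) - (τ:ℝ) • d b
        = ∑ j ∈ range τ, ((d (b + j) - d b) - (η * (1 - γ (b + j))) • g (b + j)) := by
      have h2 : ∀ j, (d (b + j) - d b) - (η * (1 - γ (b + j))) • g (b + j)
          = (d (b + j) - (η * (1 - γ (b + j))) • g (b + j)) - d b := by
        intro j; abel
      rw [Finset.sum_congr rfl (fun j _ => h2 j), Finset.sum_sub_distrib,
        Finset.sum_const, Finset.card_range, hsum,
        Finset.sum_congr rfl (fun j hj => hterm j (Finset.mem_range.mp hj))]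
      congr 1
      exact Nat.cast_smul_eq_nsmul ℝ τ (d b)
    rw [key]
    refine le_trans (norm_sum_le _ _) ?_
    have hterm2 : ∀ j ∈ range τ,
        ‖(d (b + j) - d b) - (η * (1 - γ (b + j))) • g (b + j)‖
          ≤ (τ:ℝ) * ((1 - γ b) * (‖d b‖ + τ * (η * G) + η * G)) + (1 - γ b) * (η * G) := by
      intro j hj
      have hjτ : j ≤ τ := le_of_lt (Finset.mem_range.mp hj)
      have hDj := hD b hbτ j hjτ
      have hm : γ b ≤ γ (b + j) := hγmono (by omega)
      refine le_trans (norm_sub_le _ _) ?_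
      rw [norm_smul, Real.norm_eq_abs,
        abs_of_nonneg (by nlinarith [hγ1 (b+j)] : (0:ℝ) ≤ η * (1 - γ (b + j)))]
      have hK0 : (0:ℝ) ≤ (1 - γ b) * (‖d b‖ + τ * (η * G) + η * G) := by
        have := hγ1 b
        have h6 : (0:ℝ) ≤ ‖d b‖ + (τ:ℝ) * (η * G) + η * G := by positivity
        nlinarith
      have hjτ' : (j:ℝ) ≤ (τ:ℝ) := by exact_mod_cast hjτ
      have hg1 : η * (1 - γ (b + j)) * ‖g (b + j)‖ ≤ (1 - γ b) * (η * G) := by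
        have h5 : (0:ℝ) ≤ 1 - γ (b + j) := by linarith [hγ1 (b + j)]
        have e1 : η * (1 - γ (b + j)) * ‖g (b + j)‖ ≤ η * (1 - γ (b + j)) * G :=
          mul_le_mul_of_nonneg_left (hgn _) (mul_nonneg hη.le h5)
        have e2 : η * (1 - γ (b + j)) * G ≤ η * (1 - γ b) * G :=
          mul_le_mul_of_nonneg_right
            (mul_le_mul_of_nonneg_left (by linarith) hη.le) hG0
        nlinarith [e1, e2]
      nlinarith [hDj, mul_le_mul_of_nonneg_right hjτ' hK0]
    refine le_trans (Finset.sum_le_sum hterm2) ?_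
    rw [Finset.sum_const, Finset.card_range, nsmul_eq_mul]
    ring_nf
    nlinarith [hγ1 b, hγ0 b]
  -- the asymptotic error coefficient
  set C₀ : ℝ := (τ:ℝ)^2 + (τ:ℝ) * ((τ:ℝ)*((τ:ℝ)*(η*G) + η*G) + η*G) / δ with hC₀def
  have hC₀0 : 0 ≤ C₀ := by positivity
  set a : ℕ → ℝ := fun t => (1 - γ (t - τ)) * C₀ with hadef
  have hγτ : Tendsto (fun t => γ (t - τ)) atTop (nhds 1) :=
    hγlim.comp (tendsto_sub_atTop_nat τ)
  have ha0 : Tendsto a atTop (nhds 0) := by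
    have h1 : Tendsto (fun t => (1 - γ (t - τ))) atTop (nhds 0) := by
      have := tendsto_const_nhds (x := (1:ℝ)) (f := atTop (α := ℕ)) |>.sub hγτ
      simpa using this
    simpa using h1.mul_const C₀
  have hτR : (0:ℝ) < (τ:ℝ) := by exact_mod_cast Nat.lt_of_lt_of_le Nat.zero_lt_one hτ
  have hL : Tendsto (fun t => ((τ:ℝ) - a t)/((τ:ℝ) + a t)) atTop (nhds 1) := by
    have h := (tendsto_const_nhds (x := (τ:ℝ)) (f := atTop (α := ℕ)) |>.sub ha0).div
      (tendsto_const_nhds (x := (τ:ℝ)) (f := atTop (α := ℕ)) |>.add ha0)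
      (by simpa using hτR.ne')
    rw [sub_zero, add_zero, div_self hτR.ne'] at h
    exact h
  have hup : ∀ t, ⟪w t - w (t - τ), d (t - τ)⟫ / (‖w t - w (t - τ)‖ * ‖d (t - τ)‖) ≤ 1 := by
    intro t
    rcases eq_or_lt_of_le (mul_nonneg (norm_nonneg (w t - w (t-τ))) (norm_nonneg (d (t-τ)))) with h | h
    · rw [← h]; simp
    · exact (div_le_one h).mpr (real_inner_le_norm _ _)
  have hat0 : ∀ t, 0 ≤ a t := by
    intro t
    have := hγ1 (t - τ)
    apply mul_nonneg (by linarith) hC₀0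
  have hlow : ∀ᶠ t in atTop, ((τ:ℝ) - a t)/((τ:ℝ) + a t)
      ≤ ⟪w t - w (t - τ), d (t - τ)⟫ / (‖w t - w (t - τ)‖ * ‖d (t - τ)‖) := by
    filter_upwards [hdlb, eventually_ge_atTop (2*τ+2), ha0.eventually_lt_const hτR]
      with t hdt ht hat
    have hE := htel t ht
    set b := t - τ with hbdef
    set u := d b with hudef
    set Δ := w t - w b with hΔdef
    have hNu : δ ≤ ‖u‖ := hdt
    have hNu0 : 0 < ‖u‖ := lt_of_lt_of_le hδ hNu
    have hgb1 : γ b ≤ 1 := hγ1 b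
    have hea : ‖Δ - (τ:ℝ) • u‖ ≤ a t * ‖u‖ := by
      refine hE.trans ?_
      have hB0 : (0:ℝ) ≤ (τ:ℝ)*((τ:ℝ)*((τ:ℝ)*(η*G)+η*G)+η*G) := by positivity
      have h1 : (τ:ℝ)*((τ:ℝ)*((τ:ℝ)*(η*G)+η*G)+η*G)
          ≤ (τ:ℝ)*((τ:ℝ)*((τ:ℝ)*(η*G)+η*G)+η*G)/δ * ‖u‖ := by
        rw [div_mul_eq_mul_div, le_div_iff₀ hδ]
        exact mul_le_mul_of_nonneg_left hNu hB0
      have h2 : (0:ℝ) ≤ 1 - γ b := by linarith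
      have h3 := mul_le_mul_of_nonneg_left h1 h2
      rw [hadef, hC₀def]
      nlinarith [h3]
    set e := Δ - (τ:ℝ) • u with hedef
    have hΔe : Δ = (τ:ℝ) • u + e := by rw [hedef]; abel
    have hinner : ⟪Δ, u⟫ = (τ:ℝ) * ‖u‖^2 + ⟪e, u⟫ := by
      rw [hΔe, inner_add_left, real_inner_smul_left, real_inner_self_eq_norm_sq]
    have he_u : |⟪e, u⟫| ≤ ‖e‖ * ‖u‖ := abs_real_inner_le_norm _ _
    have he_u' : -(‖e‖ * ‖u‖) ≤ ⟪e, u⟫ := (abs_le.mp he_u).1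
    have heun : ‖e‖ * ‖u‖ ≤ a t * ‖u‖^2 := by nlinarith [hea, norm_nonneg u]
    have hI_lb : ((τ:ℝ) - a t) * ‖u‖^2 ≤ ⟪Δ, u⟫ := by
      rw [hinner]; nlinarith
    have hNΔ_ub : ‖Δ‖ ≤ ((τ:ℝ) + a t) * ‖u‖ := by
      rw [hΔe]
      refine (norm_add_le _ _).trans ?_
      rw [norm_smul, Real.norm_eq_abs, abs_of_nonneg hτR.le]
      nlinarith [hea]
    have hI_pos : 0 < ⟪Δ, u⟫ := by
      refine lt_of_lt_of_le ?_ hI_lb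
      have := pow_pos hNu0 2
      nlinarith
    have hden_pos : 0 < ‖Δ‖ * ‖u‖ := lt_of_lt_of_le hI_pos (real_inner_le_norm _ _)
    rw [div_le_div_iff₀ (by linarith [hat0 t]) hden_pos]
    have h3 : ((τ:ℝ) - a t) * (‖Δ‖ * ‖u‖) ≤ ((τ:ℝ) - a t) * ((((τ:ℝ) + a t) * ‖u‖) * ‖u‖) := by
      apply mul_le_mul_of_nonneg_left _ (by linarith)
      exact mul_le_mul_of_nonneg_right hNΔ_ub (norm_nonneg u)
    have h4 : ((τ:ℝ) - a t) * ‖u‖^2 * ((τ:ℝ) + a t) ≤ ⟪Δ, u⟫ * ((τ:ℝ) + a t) :=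
      mul_le_mul_of_nonneg_right hI_lb (by linarith [hat0 t])
    nlinarith [h3, h4]
  exact tendsto_of_tendsto_of_tendsto_of_le_of_le' hL tendsto_const_nhds hlow
    (Filter.Eventually.of_forall hup)
end

section
/- Let f : ℝ^m → ℝ be differentiable with β-Lipschitz gradient (β > 0) and uniformly bounded gradient ‖∇f(x)‖ ≤ G for all x. Then for all points w, w̄ ∈ ℝ^m, a gradient step of size 1/β taken at the stale point w̄ satisfies f(w − (1/β)∇f(w̄)) ≤ f(w) − (1/(2β))‖∇f(w̄)‖² + G‖w − w̄‖. -/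
/-! Along the ray `t ↦ x + t • v` the slope of `f` exceeds its slope at `t = 0` by at most
`β t ‖v‖²`, so `f` stays below the quadratic model `f x + t ⟪∇f x, v⟫ + β t² ‖v‖² / 2`; at
`t = 1` this is the descent lemma. Applied at `w` in the direction `-(1/β) ∇f w̄`, it leaves the
term `-(1/β) ⟪∇f w, ∇f w̄⟫`, and replacing `∇f w` by `∇f w̄` there costs at most
`(1/β) ‖∇f w - ∇f w̄‖ ‖∇f w̄‖ ≤ ‖w - w̄‖ G`. -/

open Set

variable {E : Type*} [NormedAddCommGroup E] [InnerProductSpace ℝ E] [CompleteSpace E] {f : E → ℝ}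

theorem hasDerivAt_apply_add_smul (hf : Differentiable ℝ f) (x v : E) (t : ℝ) :
    HasDerivAt (fun t : ℝ => f (x + t • v)) (inner ℝ (gradient f (x + t • v)) v) t := by
  have hline : HasDerivAt (fun t : ℝ => x + t • v) v t := by
    simpa using ((hasDerivAt_id t).smul_const v).const_add x
  have hcomp := (hf _).hasGradientAt.hasFDerivAt.comp_hasDerivAt t hline
  rw [InnerProductSpace.toDual_apply_apply] at hcomp
  exact hcomp

theorem apply_add_le_of_norm_sub_gradient_le (hf : Differentiable ℝ f) {β : ℝ} {x : E}
    (hL : ∀ y, ‖gradient f y - gradient f x‖ ≤ β * ‖y - x‖) (v : E) :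
    f (x + v) ≤ f x + inner ℝ (gradient f x) v + β / 2 * ‖v‖ ^ 2 := by
  set gap : ℝ → ℝ := fun t => f x + t * inner ℝ (gradient f x) v + β / 2 * t ^ 2 * ‖v‖ ^ 2
    - f (x + t • v)
  have hgap : ∀ t, HasDerivAt gap (inner ℝ (gradient f x) v + β * t * ‖v‖ ^ 2
      - inner ℝ (gradient f (x + t • v)) v) t := by
    intro t
    refine ((((hasDerivAt_id t).mul_const _).const_add (f x)).add
      (((hasDerivAt_pow 2 t).const_mul (β / 2)).mul_const (‖v‖ ^ 2))
      |>.sub (hasDerivAt_apply_add_smul hf x v t)).congr_deriv ?_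
    simp only [Nat.cast_ofNat]
    ring
  have hslope : ∀ t, 0 ≤ t → inner ℝ (gradient f (x + t • v)) v
      ≤ inner ℝ (gradient f x) v + β * t * ‖v‖ ^ 2 := by
    intro t ht
    have hlip : ‖gradient f (x + t • v) - gradient f x‖ ≤ β * t * ‖v‖ := by
      simpa [norm_smul, abs_of_nonneg ht, mul_assoc] using hL (x + t • v)
    calc inner ℝ (gradient f (x + t • v)) v
        = inner ℝ (gradient f x) v + inner ℝ (gradient f (x + t • v) - gradient f x) v := by
          rw [inner_sub_left]; ring
      _ ≤ inner ℝ (gradient f x) v + ‖gradient f (x + t • v) - gradient f x‖ * ‖v‖ := by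
          gcongr; exact real_inner_le_norm _ _
      _ ≤ inner ℝ (gradient f x) v + β * t * ‖v‖ * ‖v‖ := by gcongr
      _ = _ := by ring
  have hmono : MonotoneOn gap (Ici 0) := by
    refine monotoneOn_of_hasDerivWithinAt_nonneg (convex_Ici 0)
      (fun t _ => (hgap t).continuousAt.continuousWithinAt)
      (fun t _ => (hgap t).hasDerivWithinAt) fun t ht => ?_
    rw [interior_Ici] at ht
    linarith [hslope t (le_of_lt ht)]
  have hgap01 := hmono self_mem_Ici (mem_Ici.mpr zero_le_one) zero_le_one
  simp only [gap, zero_smul, add_zero, one_smul] at hgap01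
  linarith

/-- If `f` is differentiable with `β`-Lipschitz gradient (`β > 0`) and
uniformly bounded gradient `‖∇f x‖ ≤ G`, then for all `w, w̄`, a gradient step of size
`1/β` taken at the stale point `w̄` satisfies
`f (w - (1/β) • ∇f w̄) ≤ f w - (1/(2β)) ‖∇f w̄‖² + G ‖w - w̄‖`. -/
theorem stale_gradient_descent_lemma
    {m : ℕ} (f : EuclideanSpace ℝ (Fin m) → ℝ) (hdiff : Differentiable ℝ f)
    (β : ℝ) (hβ : 0 < β)
    (hsmooth : ∀ x y, ‖gradient f x - gradient f y‖ ≤ β * ‖x - y‖)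
    (G : ℝ) (hG : ∀ x, ‖gradient f x‖ ≤ G)
    (w wbar : EuclideanSpace ℝ (Fin m)) :
    f (w - (1 / β) • gradient f wbar) ≤
      f w - (1 / (2 * β)) * ‖gradient f wbar‖ ^ 2 + G * ‖w - wbar‖ := by
  set g := gradient f wbar
  have descent := apply_add_le_of_norm_sub_gradient_le hdiff (fun y => hsmooth y w)
    (-((1 / β) • g))
  rw [← sub_eq_add_neg, inner_neg_right, real_inner_smul_right, norm_neg, norm_smul,
    Real.norm_of_nonneg (by positivity)] at descent
  have stale : ‖g‖ ^ 2 - β * ‖w - wbar‖ * G ≤ inner ℝ (gradient f w) g := by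
    have hcross : |inner ℝ (gradient f w - g) g| ≤ β * ‖w - wbar‖ * G :=
      (abs_real_inner_le_norm _ _).trans
        (mul_le_mul (hsmooth w wbar) (hG wbar) (norm_nonneg _) (by positivity))
    rw [inner_sub_left, real_inner_self_eq_norm_sq] at hcross
    linarith [neg_abs_le (inner ℝ (gradient f w) g - ‖g‖ ^ 2)]
  calc f (w - (1 / β) • g)
      ≤ f w - 1 / β * inner ℝ (gradient f w) g + β / 2 * (1 / β * ‖g‖) ^ 2 := by linarith
    _ ≤ f w - 1 / β * (‖g‖ ^ 2 - β * ‖w - wbar‖ * G) + β / 2 * (1 / β * ‖g‖) ^ 2 := by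
        gcongr
    _ = _ := by field_simp; ring
end
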